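/- arXiv:2510.13180 — 4 statements merged into one kernel-verified Lean document; each statement's English description precedes it below -/
import Mathlib

section
/- Let A be an m×n real matrix and let k be a natural number with 2k < spark(A). Then for each y ∈ ℝ^m there exists at most one k-sparse signal x ∈ Σ_k such that y = A x; equivalently, if x, x' ∈ ℝ^n both have at most k nonzero entries and A x = A x', then x = x'. -/
noncomputable section
open Matrix ENNReal

/-- The matrix `A ⊗ ε_γᵀ` (each column of `A` repeated `γ` consecutive times,
scaled by `1/√γ`), with the column index set `Fin n × Fin γ` flattened to `Fin (n·γ)`. -/
def kronEpsT {m n : ℕ} (A : Matrix (Fin m) (Fin n) ℝ) (γ : ℕ) :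
    Matrix (Fin m) (Fin (n * γ)) ℝ :=
  Matrix.of fun i k =>
    A i ⟨(k : ℕ) / γ, by
      have hk := k.isLt
      rcases Nat.eq_zero_or_pos γ with h | h
      · subst h; exact absurd hk (by simp)
      · exact (Nat.div_lt_iff_lt_mul h).2 hk⟩ * (Real.sqrt (γ : ℝ))⁻¹

/-- The block-sum vector `x^γ ∈ ℝⁿ` of `x ∈ ℝ^{nγ}`:
`(x^γ)_j` is the sum of the `j`-th block of `γ` consecutive entries of `x`. -/
def blockSum {n γ : ℕ} (x : Fin (n * γ) → ℝ) : Fin n → ℝ :=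
  fun j => ∑ i : Fin γ, x (finProdFinEquiv (j, i))

/-- The block-average expansion `x̄ ∈ ℝ^{nγ}`: every entry in the `j`-th block of `γ`
consecutive entries is replaced by the block average `(x^γ)_j / γ`. -/
def blockAvg {n γ : ℕ} (x : Fin (n * γ) → ℝ) : Fin (n * γ) → ℝ :=
  fun k => blockSum x (finProdFinEquiv.symm k).1 / (γ : ℝ)

/-- The spark of `A`: the smallest number of columns of `A` that form a linearly
dependent set (`⊤` if all sets of columns are linearly independent).  Equivalently,
the minimal size of the support of a nonzero vector in the kernel of `A`. -/
def spark {m n : ℕ} (A : Matrix (Fin m) (Fin n) ℝ) : ℕ∞ :=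
  sInf {c : ℕ∞ | ∃ v : Fin n → ℝ, v ≠ 0 ∧ A.mulVec v = 0 ∧
    c = ((Function.support v).ncard : ℕ∞)}

/-- The mutual coherence `μ(A)`: the largest normalized absolute inner product
between two distinct columns of `A`. -/
def coherence {m n : ℕ} (A : Matrix (Fin m) (Fin n) ℝ) : ℝ :=
  sSup {r : ℝ | ∃ i j : Fin n, i ≠ j ∧
    r = |∑ t, A t i * A t j| /
      (Real.sqrt (∑ t, A t i ^ 2) * Real.sqrt (∑ t, A t j ^ 2))}

/-- `A` satisfies the restricted isometry property of order `s` with constant `δ`. -/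
def RIP {m n : ℕ} (A : Matrix (Fin m) (Fin n) ℝ) (s : ℕ) (δ : ℝ) : Prop :=
  ∀ v : Fin n → ℝ, (Function.support v).ncard ≤ s →
    (1 - δ) * (∑ j, v j ^ 2) ≤ (∑ i, (A.mulVec v) i ^ 2) ∧
    (∑ i, (A.mulVec v) i ^ 2) ≤ (1 + δ) * (∑ j, v j ^ 2)

theorem ncard_support_sub_le {α M : Type*} [Finite α] [AddGroup M] (x y : α → M) :
    (Function.support (x - y)).ncard ≤
      (Function.support x).ncard + (Function.support y).ncard :=
  (Set.ncard_le_ncard (Function.support_sub x y) (Set.toFinite _)).trans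
    (Set.ncard_union_le _ _)

theorem spark_le_ncard_support {m n : ℕ} {A : Matrix (Fin m) (Fin n) ℝ} {v : Fin n → ℝ}
    (hv : v ≠ 0) (hAv : A *ᵥ v = 0) : spark A ≤ (Function.support v).ncard :=
  sInf_le ⟨v, hv, hAv, rfl⟩

theorem eq_of_mulVec_eq_of_ncard_support_add_lt_spark {m n : ℕ}
    {A : Matrix (Fin m) (Fin n) ℝ} {x x' : Fin n → ℝ}
    (hs : (((Function.support x).ncard + (Function.support x').ncard : ℕ) : ℕ∞) < spark A)
    (hA : A *ᵥ x = A *ᵥ x') : x = x' := by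
  by_contra hne
  have hker : A *ᵥ (x - x') = 0 := by rw [Matrix.mulVec_sub, hA, sub_self]
  have hspark := spark_le_ncard_support (sub_ne_zero.mpr hne) hker
  have hsupp : ((Function.support (x - x')).ncard : ℕ∞) ≤
      ((Function.support x).ncard + (Function.support x').ncard : ℕ) := by
    exact_mod_cast ncard_support_sub_le x x'
  exact (hs.trans_le (hspark.trans hsupp)).false

/-- If `2k < spark(A)` then for each `y` there is at most one `k`-sparse
`x` with `y = A x`; equivalently, `k`-sparse `x, x'` with `A x = A x'` coincide. -/
theorem spark_sparse_unique {m n k : ℕ} (A : Matrix (Fin m) (Fin n) ℝ)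
    (hk : ((2 * k : ℕ) : ℕ∞) < spark A) :
    (∀ y : Fin m → ℝ, Set.Subsingleton
        {x : Fin n → ℝ | (Function.support x).ncard ≤ k ∧ A.mulVec x = y}) ∧
    ∀ x x' : Fin n → ℝ, (Function.support x).ncard ≤ k →
      (Function.support x').ncard ≤ k → A.mulVec x = A.mulVec x' → x = x' := by
  have sparse_eq : ∀ x x' : Fin n → ℝ, (Function.support x).ncard ≤ k →
      (Function.support x').ncard ≤ k → A *ᵥ x = A *ᵥ x' → x = x' :=
    fun x x' hx hx' hA =>
      eq_of_mulVec_eq_of_ncard_support_add_lt_spark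
        (lt_of_le_of_lt (by gcongr; omega) hk) hA
  exact ⟨fun y x hx x' hx' => sparse_eq x x' hx.1 hx'.1 (hx.2.trans hx'.2.symm), sparse_eq⟩
end
end

section
/- Let A be an m×n real matrix with nonzero columns, γ ≥ 1, and k a natural number with k < (1/2)(1 + 1/μ(A)). Then for each y ∈ ℝ^m there exists at most one k-sparse vector z ∈ Σ_k ⊆ ℝ^n such that y = (1/√γ) A z; that is, if z, z' ∈ ℝ^n each have at most k nonzero entries and (1/√γ) A z = (1/√γ) A z', then z = z'. -/
noncomputable section
open Matrix ENNReal

/-! If `A v = 0` with `v ≠ 0`, pick `j` in the support of `v` maximising `‖aₗ‖ |vₗ|`. Row `j` of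
`AᵀA v = 0` reads `‖aⱼ‖² vⱼ = -∑_{l ≠ j} ⟨aⱼ, aₗ⟩ vₗ`, and bounding each `|⟨aⱼ, aₗ⟩|` by
`μ ‖aⱼ‖ ‖aₗ‖` gives `1 ≤ μ (s - 1)`, where `s` is the number of nonzero entries of `v`.
The hypothesis on `k` gives `μ (2k - 1) < 1`, so the difference of two `k`-sparse
solutions, which has at most `2k` nonzero entries, must vanish. -/

theorem Matrix.apply_self_mul_eq_neg_sum_erase {ι R : Type*} [Fintype ι] [DecidableEq ι]
    [CommRing R] {G : Matrix ι ι R} {v : ι → R} (hv : G *ᵥ v = 0) {S : Finset ι}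
    (hS : ∀ l ∉ S, v l = 0) {j : ι} (hj : j ∈ S) :
    G j j * v j = -∑ l ∈ S.erase j, G j l * v l := by
  have hrow : ∑ l ∈ S, G j l * v l = 0 := by
    rw [Finset.sum_subset (Finset.subset_univ S) fun l _ hl => by rw [hS l hl, mul_zero]]
    exact congrFun hv j
  rw [← Finset.add_sum_erase S _ hj] at hrow
  exact eq_neg_of_add_eq_zero_left hrow

theorem Matrix.eq_zero_of_mulVec_eq_zero_of_abs_offDiag_le {ι : Type*} [Fintype ι]
    {G : Matrix ι ι ℝ} {c : ι → ℝ} {μ : ℝ} {s : ℕ} {v : ι → ℝ}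
    (hc : ∀ j, 0 < c j) (hμ : 0 ≤ μ) (hdiag : ∀ j, G j j = c j ^ 2)
    (hoff : ∀ j l, j ≠ l → |G j l| ≤ μ * (c j * c l)) (hμs : μ * ((s : ℝ) - 1) < 1)
    (hv : G *ᵥ v = 0) (hsupp : (Function.support v).ncard ≤ s) : v = 0 := by
  classical
  by_contra hv0
  set S := (Set.toFinite (Function.support v)).toFinset
  have hmem : ∀ l, l ∈ S ↔ v l ≠ 0 := fun l => by simp [S]
  obtain ⟨j, hjS, hjmax⟩ := S.exists_max_image (fun l => c l * |v l|) <| by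
    obtain ⟨l, hl⟩ := Function.ne_iff.1 hv0
    exact ⟨l, (hmem l).2 hl⟩
  have hcard : ((S.erase j).card : ℝ) ≤ s - 1 := by
    have hSs : S.card ≤ s := by rwa [Set.ncard_eq_toFinset_card _ (Set.toFinite _)] at hsupp
    rw [le_sub_iff_add_le]
    exact_mod_cast (Finset.card_erase_add_one hjS).trans_le hSs
  have hrow := apply_self_mul_eq_neg_sum_erase hv (fun l hl => not_not.1 (mt (hmem l).2 hl)) hjS
  rw [hdiag] at hrow
  have hbound : 1 * (c j * (c j * |v j|)) ≤ μ * (S.erase j).card * (c j * (c j * |v j|)) :=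
    calc 1 * (c j * (c j * |v j|)) = |c j ^ 2 * v j| := by
          rw [abs_mul, abs_of_nonneg (sq_nonneg (c j))]; ring
      _ ≤ ∑ l ∈ S.erase j, |G j l| * |v l| := by
          rw [hrow, abs_neg]
          exact (Finset.abs_sum_le_sum_abs _ _).trans_eq (by simp only [abs_mul])
      _ ≤ ∑ l ∈ S.erase j, μ * c j * (c j * |v j|) := by
          refine Finset.sum_le_sum fun l hl => ?_
          calc |G j l| * |v l| ≤ μ * (c j * c l) * |v l| :=
                mul_le_mul_of_nonneg_right (hoff j l (Finset.ne_of_mem_erase hl).symm)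
                  (abs_nonneg _)
            _ = μ * c j * (c l * |v l|) := by ring
            _ ≤ μ * c j * (c j * |v j|) :=
                mul_le_mul_of_nonneg_left (hjmax l (Finset.mem_of_mem_erase hl))
                  (mul_nonneg hμ (hc j).le)
      _ = μ * (S.erase j).card * (c j * (c j * |v j|)) := by
          rw [Finset.sum_const, nsmul_eq_mul]; ring
  have hpos : 0 < c j * (c j * |v j|) := by
    have := hc j
    have := abs_pos.2 ((hmem j).1 hjS)
    positivity
  have h1 : 1 ≤ μ * (S.erase j).card := le_of_mul_le_mul_right hbound hpos
  linarith [mul_le_mul_of_nonneg_left hcard hμ]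

namespace Matrix

variable {m n : ℕ}

def colNorm (A : Matrix (Fin m) (Fin n) ℝ) (j : Fin n) : ℝ :=
  √(∑ t, A t j ^ 2)

theorem colNorm_pos {A : Matrix (Fin m) (Fin n) ℝ} {j : Fin n} (hA : (fun i => A i j) ≠ 0) :
    0 < colNorm A j := by
  obtain ⟨t, ht⟩ := Function.ne_iff.1 hA
  exact Real.sqrt_pos.2 <|
    Finset.sum_pos' (fun t _ => sq_nonneg _) ⟨t, Finset.mem_univ t, sq_pos_of_ne_zero ht⟩

theorem transpose_mul_self_apply_self (A : Matrix (Fin m) (Fin n) ℝ) (j : Fin n) :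
    (Aᵀ * A) j j = colNorm A j ^ 2 := by
  rw [colNorm, Real.sq_sqrt (Finset.sum_nonneg fun _ _ => sq_nonneg _)]
  simp [mul_apply, sq]

theorem abs_transpose_mul_self_apply_le (A : Matrix (Fin m) (Fin n) ℝ) (i j : Fin n) :
    |(Aᵀ * A) i j| ≤ colNorm A i * colNorm A j := by
  rw [colNorm, colNorm, ← Real.sqrt_mul (Finset.sum_nonneg fun _ _ => sq_nonneg _)]
  exact Real.abs_le_sqrt (by simpa [mul_apply] using Finset.sum_mul_sq_le_sq_mul_sq _ _ _)

theorem coherence_nonneg (A : Matrix (Fin m) (Fin n) ℝ) : 0 ≤ coherence A :=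
  Real.sSup_nonneg <| by rintro _ ⟨i, j, -, rfl⟩; positivity

theorem abs_transpose_mul_self_apply_le_coherence_mul {A : Matrix (Fin m) (Fin n) ℝ}
    {i j : Fin n} (hi : 0 < colNorm A i) (hj : 0 < colNorm A j) (hij : i ≠ j) :
    |(Aᵀ * A) i j| ≤ coherence A * (colNorm A i * colNorm A j) := by
  have hbdd : BddAbove {r : ℝ | ∃ i j : Fin n, i ≠ j ∧
      r = |∑ t, A t i * A t j| / (colNorm A i * colNorm A j)} := by
    refine ⟨1, ?_⟩
    rintro _ ⟨a, b, -, rfl⟩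
    exact div_le_one_of_le₀ (by simpa [mul_apply] using abs_transpose_mul_self_apply_le A a b)
      (mul_nonneg (Real.sqrt_nonneg _) (Real.sqrt_nonneg _))
  have hentry : (Aᵀ * A) i j = ∑ t, A t i * A t j := by simp [mul_apply]
  rw [← div_le_iff₀ (mul_pos hi hj), hentry]
  exact le_csSup hbdd ⟨i, j, hij, rfl⟩

theorem eq_zero_of_mulVec_eq_zero_of_coherence {A : Matrix (Fin m) (Fin n) ℝ}
    (hA : ∀ j : Fin n, (fun i => A i j) ≠ 0) {s : ℕ} (hs : coherence A * ((s : ℝ) - 1) < 1)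
    {v : Fin n → ℝ} (hv : A *ᵥ v = 0) (hsupp : (Function.support v).ncard ≤ s) : v = 0 :=
  eq_zero_of_mulVec_eq_zero_of_abs_offDiag_le (fun j => colNorm_pos (hA j))
    (coherence_nonneg A) (transpose_mul_self_apply_self A)
    (fun _ _ => abs_transpose_mul_self_apply_le_coherence_mul (colNorm_pos (hA _))
      (colNorm_pos (hA _))) hs
    (by rw [← mulVec_mulVec, hv, mulVec_zero]) hsupp

end Matrix

theorem mul_two_mul_sub_one_lt_one {μ x : ℝ} (hμ : 0 ≤ μ) (hx : x < 1 / 2 * (1 + 1 / μ)) :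
    μ * (2 * x - 1) < 1 := by
  rcases hμ.eq_or_lt with rfl | hμ
  · simp
  · have := mul_lt_mul_of_pos_left hx hμ
    field_simp at this
    linarith

theorem ncard_support_sub_le_s9 {ι : Type*} [Finite ι] (z z' : ι → ℝ) :
    (Function.support (z - z')).ncard ≤
      (Function.support z).ncard + (Function.support z').ncard :=
  (Set.ncard_le_ncard (Function.support_sub z z')).trans (Set.ncard_union_le _ _)

theorem Matrix.eq_of_mulVec_eq_of_coherence {m n k : ℕ} {A : Matrix (Fin m) (Fin n) ℝ}
    (hA : ∀ j : Fin n, (fun i => A i j) ≠ 0) (hk : (k : ℝ) < 1 / 2 * (1 + 1 / coherence A))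
    {z z' : Fin n → ℝ} (hz : (Function.support z).ncard ≤ k)
    (hz' : (Function.support z').ncard ≤ k) (h : A *ᵥ z = A *ᵥ z') : z = z' := by
  have hs : coherence A * (((2 * k : ℕ) : ℝ) - 1) < 1 := by
    push_cast
    exact mul_two_mul_sub_one_lt_one (coherence_nonneg A) hk
  refine sub_eq_zero.1 <| eq_zero_of_mulVec_eq_zero_of_coherence hA hs ?_ ?_
  · rw [mulVec_sub, h, sub_self]
  · exact (ncard_support_sub_le_s9 z z').trans (by omega)

theorem coherence_sparse_unique_general {m n γ k : ℕ} (hγ : 1 ≤ γ)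
    (A : Matrix (Fin m) (Fin n) ℝ) (hA : ∀ j : Fin n, (fun i => A i j) ≠ 0)
    (hk : (k : ℝ) < (1 / 2) * (1 + 1 / coherence A)) :
    (∀ y : Fin m → ℝ, Set.Subsingleton
        {z : Fin n → ℝ | (Function.support z).ncard ≤ k ∧
          (Real.sqrt (γ : ℝ))⁻¹ • A.mulVec z = y}) ∧
    ∀ z z' : Fin n → ℝ, (Function.support z).ncard ≤ k →
      (Function.support z').ncard ≤ k →
      (Real.sqrt (γ : ℝ))⁻¹ • A.mulVec z = (Real.sqrt (γ : ℝ))⁻¹ • A.mulVec z' →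
      z = z' := by
  have hscale : (Real.sqrt (γ : ℝ))⁻¹ ≠ 0 := by
    have : (0 : ℝ) < γ := by exact_mod_cast hγ
    positivity
  refine ⟨fun y z hz z' hz' => ?_, fun z z' hz hz' h => ?_⟩
  · exact A.eq_of_mulVec_eq_of_coherence hA hk hz.1 hz'.1
      (smul_right_injective _ hscale (hz.2.trans hz'.2.symm))
  · exact A.eq_of_mulVec_eq_of_coherence hA hk hz hz' (smul_right_injective _ hscale h)

/-- If `k < (1/2)(1 + 1/μ(A))` then for each `y` there is at most one
`k`-sparse `z` with `y = (1/√γ) A z`. -/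
theorem coherence_sparse_unique {m n γ k : ℕ} (hγ : 1 ≤ γ)
    (A : Matrix (Fin m) (Fin n) ℝ) (hA : ∀ j : Fin n, (fun i => A i j) ≠ 0)
    (hμ : 0 < coherence A)
    (hk : (k : ℝ) < (1 / 2) * (1 + 1 / coherence A)) :
    (∀ y : Fin m → ℝ, Set.Subsingleton
        {z : Fin n → ℝ | (Function.support z).ncard ≤ k ∧
          (Real.sqrt (γ : ℝ))⁻¹ • A.mulVec z = y}) ∧
    ∀ z z' : Fin n → ℝ, (Function.support z).ncard ≤ k →
      (Function.support z').ncard ≤ k →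
      (Real.sqrt (γ : ℝ))⁻¹ • A.mulVec z = (Real.sqrt (γ : ℝ))⁻¹ • A.mulVec z' →
      z = z' :=
  coherence_sparse_unique_general hγ A hA hk
end
end

section
/- Let A be an m×n real matrix satisfying the restricted isometry property of order 2k with constant δ_{2k} < √2 − 1, and let x ∈ ℝ^n be k-sparse. Then x is the unique solution of the ℓ₁ minimization problem: for every z ∈ ℝ^n with A z = A x and z ≠ x, one has ‖x‖₁ < ‖z‖₁; in particular x = argmin { ‖z‖₁ : A z = A x }. -/
noncomputable section
open Matrix ENNReal

/-!
Candès' argument, through the null space property. If `A z = A x` with `z ≠ x`, then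
`h = z - x` is a nonzero kernel vector, and `‖z‖₁ ≤ ‖x‖₁` would force the cone condition
`‖h_{Sᶜ}‖₁ ≤ ‖h_S‖₁` for `S = supp x`. Cut `Sᶜ` into blocks `T₁, T₂, …` of `k` entries of
decreasing magnitude: every entry of `T_{j+1}` is at most the mean of `|h|` on `T_j`, so
`‖h_{T_{j+1}}‖₂ ≤ ‖h_{T_j}‖₁ / √k`, and the tail satisfies
`∑_{j ≥ 2} ‖h_{T_j}‖₂ ≤ ‖h_{Sᶜ}‖₁ / √k ≤ ‖h_S‖₁ / √k ≤ ‖h_S‖₂`.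
By polarization, RIP makes `A` nearly orthogonal on disjointly supported `k`-sparse vectors,
`|⟪A u, A v⟫| ≤ δ ‖u‖₂ ‖v‖₂`. For `w = h_S + h_{T₁}` this gives
`(1 - δ) ‖w‖₂² ≤ ‖A w‖₂² = -∑_{j ≥ 2} ⟪A w, A h_{T_j}⟫ ≤ √2 δ ‖w‖₂²`,
so `w = 0` as soon as `δ < √2 - 1`, and then the whole of `h` vanishes.
-/

open Finset Function

lemma ncard_support_add_le {ι M : Type*} [Finite ι] [AddZeroClass M] (u v : ι → M) :
    (support (u + v)).ncard ≤ (support u).ncard + (support v).ncard :=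
  (Set.ncard_le_ncard (support_add u v)).trans (Set.ncard_union_le _ _)

lemma sqrt_sum_sq_le_sum_abs_div_sqrt {ι : Type*} {k : ℕ} (hk : 0 < k) {P Q : Finset ι}
    {f : ι → ℝ} (hQ : #Q ≤ k) (hP : k ≤ #P) (hle : ∀ t ∈ Q, ∀ t' ∈ P, |f t| ≤ |f t'|) :
    √(∑ t ∈ Q, f t ^ 2) ≤ (∑ t ∈ P, |f t|) / √k := by
  set L := ∑ t ∈ P, |f t|
  have hkR : (0 : ℝ) < k := by exact_mod_cast hk
  have hbound : ∀ t ∈ Q, |f t| ≤ L / k := fun t ht => by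
    rw [le_div_iff₀ hkR]
    calc |f t| * k ≤ |f t| * #P := by gcongr
      _ = ∑ _t' ∈ P, |f t| := by rw [sum_const, nsmul_eq_mul, mul_comm]
      _ ≤ L := sum_le_sum (hle t ht)
  rw [Real.sqrt_le_left (by positivity), div_pow, Real.sq_sqrt hkR.le]
  calc ∑ t ∈ Q, f t ^ 2 ≤ ∑ _t ∈ Q, (L / k) ^ 2 := by
        refine sum_le_sum fun t ht => ?_
        rw [← sq_abs]
        exact pow_le_pow_left₀ (abs_nonneg _) (hbound t ht) 2
    _ = #Q * (L / k) ^ 2 := by rw [sum_const, nsmul_eq_mul]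
    _ ≤ k * (L / k) ^ 2 := by gcongr
    _ = L ^ 2 / k := by field_simp

section Fintype

variable {ι : Type*} [Fintype ι]

lemma card_filter_ne_zero_eq_ncard_support {M : Type*} [Zero M] (v : ι → M)
    [DecidablePred fun t => v t ≠ 0] : #{t | v t ≠ 0} = (support v).ncard := by
  rw [← Set.ncard_coe_finset]
  congr
  ext
  simp

lemma dotProduct_self_nonneg (v : ι → ℝ) : 0 ≤ v ⬝ᵥ v :=
  sum_nonneg fun t _ => mul_self_nonneg (v t)

lemma dotProduct_self_pos {v : ι → ℝ} (hv : v ≠ 0) : 0 < v ⬝ᵥ v :=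
  (dotProduct_self_nonneg v).lt_of_ne' (dotProduct_self_eq_zero.not.2 hv)

lemma dotProduct_add_self_of_dotProduct_eq_zero {u v : ι → ℝ} (huv : u ⬝ᵥ v = 0) :
    (u + v) ⬝ᵥ (u + v) = u ⬝ᵥ u + v ⬝ᵥ v := by
  simp only [add_dotProduct, dotProduct_add, dotProduct_comm v u, huv]
  ring

lemma sum_abs_le_sqrt_mul_sqrt_dotProduct {k : ℕ} {v : ι → ℝ} (hv : (support v).ncard ≤ k) :
    ∑ t, |v t| ≤ √k * √(v ⬝ᵥ v) := by
  set S : Finset ι := {t | v t ≠ 0}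
  have hS : #S ≤ k := by rwa [card_filter_ne_zero_eq_ncard_support]
  have hsq : (∑ t ∈ S, |v t|) ^ 2 ≤ k * (v ⬝ᵥ v) :=
    calc (∑ t ∈ S, |v t|) ^ 2 ≤ #S * ∑ t ∈ S, |v t| ^ 2 := sq_sum_le_card_mul_sum_sq
      _ ≤ k * ∑ t, v t ^ 2 := by
        simp only [sq_abs]
        gcongr
        exact subset_univ S
      _ = k * (v ⬝ᵥ v) := by simp [dotProduct, sq]
  rw [← Real.sqrt_mul (by positivity), Real.le_sqrt (by positivity)
    (mul_nonneg k.cast_nonneg (dotProduct_self_nonneg v)), ← sum_filter_ne_zero]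
  simpa [S] using hsq

lemma indicator_dotProduct_indicator_self (s : Finset ι) (f : ι → ℝ) :
    (s : Set ι).indicator f ⬝ᵥ (s : Set ι).indicator f = ∑ t ∈ s, f t ^ 2 := by
  simpa only [dotProduct, sq] using
    sum_indicator_subset_of_eq_zero f (fun _ x => x * x) (subset_univ s) fun _ => mul_zero 0

lemma sum_abs_indicator (s : Finset ι) (f : ι → ℝ) :
    ∑ t, |(s : Set ι).indicator f t| = ∑ t ∈ s, |f t| :=
  sum_indicator_subset_of_eq_zero f (fun _ x => |x|) (subset_univ s) fun _ => abs_zero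

lemma indicator_dotProduct_indicator_of_disjoint {s s' : Set ι} (hs : Disjoint s s')
    (f g : ι → ℝ) : s.indicator f ⬝ᵥ s'.indicator g = 0 :=
  sum_eq_zero fun t _ => by
    by_cases ht : t ∈ s
    · simp [Set.indicator_of_notMem (hs.notMem_of_mem_left ht)]
    · simp [ht]

lemma ncard_support_indicator_le {M : Type*} [Zero M] (s : Finset ι) (f : ι → M) :
    (support ((s : Set ι).indicator f)).ncard ≤ #s :=
  (Set.ncard_le_ncard Set.support_indicator_subset).trans (Set.ncard_coe_finset s).le

lemma sum_indicator_fiber {M : Type*} [AddCommMonoid M] {p : ι → ℕ} {N : ℕ}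
    (hp : ∀ t, p t < N) (f : ι → M) :
    ∑ j ∈ range N, (({t | p t = j} : Finset ι) : Set ι).indicator f = f := by
  ext t
  simp [Finset.sum_apply, Set.indicator_apply, hp t]

lemma card_filter_div_eq_le {k : ℕ} (hk : 0 < k) {f : ι → ℕ} (hf : Injective f) (j : ℕ) :
    #{t | f t / k = j} ≤ k := by
  have := card_le_card_of_injOn f (s := {t | f t / k = j}) (t := Ico (j * k) (j * k + k))
    (fun t ht => by
      simp only [mem_coe, mem_filter, mem_univ, true_and, Nat.div_eq_iff hk] at ht
      simp only [mem_coe, mem_Ico]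
      omega)
    hf.injOn
  simpa using this

end Fintype

def NullSpaceProperty {m n : Type*} [Fintype n] [DecidableEq n] (A : Matrix m n ℝ) (k : ℕ) :
    Prop :=
  ∀ h, A *ᵥ h = 0 → h ≠ 0 → ∀ S : Finset n, #S ≤ k → ∑ t ∈ S, |h t| < ∑ t ∈ Sᶜ, |h t|

lemma NullSpaceProperty.sum_abs_lt {m n : Type*} [Fintype n] [DecidableEq n]
    {A : Matrix m n ℝ} {k : ℕ} (hA : NullSpaceProperty A k) {x z : n → ℝ}
    (hx : (support x).ncard ≤ k) (hz : A *ᵥ z = A *ᵥ x) (hzx : z ≠ x) :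
    ∑ t, |x t| < ∑ t, |z t| := by
  set S : Finset n := {t | x t ≠ 0}
  have hgap := hA (z - x) (by rw [mulVec_sub, hz, sub_self]) (sub_ne_zero.2 hzx) S
    (by rwa [card_filter_ne_zero_eq_ncard_support])
  have hin : ∀ t ∈ S, |x t| - |(z - x) t| ≤ |z t| := fun t _ => by
    have := abs_sub_abs_le_abs_sub (x t) (z t)
    rw [Pi.sub_apply, abs_sub_comm]
    linarith
  have hout : ∀ t ∈ Sᶜ, |(z - x) t| = |z t| := fun t ht => by
    simp only [S, mem_compl, mem_filter, mem_univ, true_and, not_not] at ht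
    simp [ht]
  calc ∑ t, |x t| = ∑ t ∈ S, |x t| := (sum_filter_of_ne fun t _ hxt => by simpa using hxt).symm
    _ < ∑ t ∈ S, (|x t| - |(z - x) t|) + ∑ t ∈ Sᶜ, |(z - x) t| := by
      rw [sum_sub_distrib]
      linarith
    _ ≤ ∑ t ∈ S, |z t| + ∑ t ∈ Sᶜ, |z t| := add_le_add (sum_le_sum hin) (sum_congr rfl hout).le
    _ = ∑ t, |z t| := sum_add_sum_compl S _

def blockIndex {n : ℕ} (S : Finset (Fin n)) (σ : Equiv.Perm (Fin n)) (k : ℕ) (t : Fin n) : ℕ :=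
  if t ∈ S then 0 else (σ.symm t : ℕ) / k + 1

def blockPart {n : ℕ} (S : Finset (Fin n)) (σ : Equiv.Perm (Fin n)) (k : ℕ) (h : Fin n → ℝ)
    (j : ℕ) : Fin n → ℝ :=
  (({t | blockIndex S σ k t = j} : Finset (Fin n)) : Set (Fin n)).indicator h

section blockIndex

variable {n k : ℕ} {S : Finset (Fin n)} {σ : Equiv.Perm (Fin n)}

lemma blockIndex_eq_zero_iff {t : Fin n} : blockIndex S σ k t = 0 ↔ t ∈ S := by
  by_cases ht : t ∈ S <;> simp [blockIndex, ht]

lemma blockIndex_eq_succ_iff {t : Fin n} {j : ℕ} :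
    blockIndex S σ k t = j + 1 ↔ t ∉ S ∧ (σ.symm t : ℕ) / k = j := by
  by_cases ht : t ∈ S <;> simp [blockIndex, ht]

lemma blockIndex_lt (t : Fin n) : blockIndex S σ k t < n + 2 := by
  have := Nat.div_le_self (σ.symm t : ℕ) k
  have := (σ.symm t).isLt
  unfold blockIndex
  split_ifs <;> omega

lemma card_blockIndex_fiber_le (hk : 0 < k) (hS : #S ≤ k) (j : ℕ) :
    #{t | blockIndex S σ k t = j} ≤ k := by
  cases j with
  | zero => simpa [blockIndex_eq_zero_iff] using hS
  | succ j =>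
    refine (card_le_card fun t => ?_).trans
      (card_filter_div_eq_le hk (Fin.val_injective.comp σ.symm.injective) j)
    simp only [mem_filter, mem_univ, true_and, blockIndex_eq_succ_iff]
    exact And.right

lemma sqrt_sum_sq_blockIndex_le (hk : 0 < k) (hS : #S ≤ k) {h : Fin n → ℝ}
    (hσ : Monotone ((fun t => if t ∈ S then (1 : ℝ) else -|h t|) ∘ σ)) (j : ℕ) :
    √(∑ t with blockIndex S σ k t = j + 2, h t ^ 2) ≤
      (∑ t with blockIndex S σ k t = j + 1, |h t|) / √k := by
  have hkey {t t' : Fin n} (hle : σ.symm t' ≤ σ.symm t) :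
      (if t' ∈ S then (1 : ℝ) else -|h t'|) ≤ if t ∈ S then 1 else -|h t| := by
    simpa using hσ hle
  rcases ({t | blockIndex S σ k t = j + 2} : Finset (Fin n)).eq_empty_or_nonempty
    with hQ | ⟨t₀, ht₀⟩
  · rw [hQ, sum_empty, Real.sqrt_zero]
    positivity
  simp only [mem_filter, mem_univ, true_and, blockIndex_eq_succ_iff, Nat.div_eq_iff hk,
    add_one_mul] at ht₀
  refine sqrt_sum_sq_le_sum_abs_div_sqrt hk (card_blockIndex_fiber_le hk hS _) ?_
    fun t ht t' ht' => ?_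
  · -- the block before a nonempty block is full, because `S` is sorted last
    have hsub : Ico (j * k) (j * k + k) ⊆
        image (fun t => (σ.symm t : ℕ)) {t | blockIndex S σ k t = j + 1} := by
      intro i hi
      rw [mem_Ico] at hi
      have hin : i < n := by have := (σ.symm t₀).isLt; omega
      refine mem_image.2 ⟨σ ⟨i, hin⟩, ?_, by simp⟩
      have hlt := hkey (t := t₀) (t' := σ ⟨i, hin⟩) (by rw [Equiv.symm_apply_apply, Fin.le_def, Fin.val_mk]; omega)
      simp only [mem_filter, mem_univ, true_and, blockIndex_eq_succ_iff,
        Equiv.symm_apply_apply, Nat.div_eq_iff hk]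
      refine ⟨fun hiS => ?_, by omega⟩
      simp only [hiS, if_true, ht₀.1, if_false] at hlt
      linarith [abs_nonneg (h t₀)]
    simpa using (card_le_card hsub).trans card_image_le
  · simp only [mem_filter, mem_univ, true_and, blockIndex_eq_succ_iff, Nat.div_eq_iff hk,
      add_one_mul] at ht ht'
    have := hkey (t := t) (t' := t') (by rw [Fin.le_def]; omega)
    simp only [ht.1, ht'.1, if_false] at this
    linarith

lemma blockPart_zero_add_one_add_sum (h : Fin n → ℝ) :
    blockPart S σ k h 0 + blockPart S σ k h 1 + ∑ j ∈ range n, blockPart S σ k h (j + 2) = h := by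
  conv_rhs => rw [← sum_indicator_fiber (p := blockIndex S σ k) blockIndex_lt h]
  change _ = ∑ j ∈ range (n + 2), blockPart S σ k h j
  rw [sum_range_succ', sum_range_succ']
  abel

lemma ncard_support_blockPart_le (hk : 0 < k) (hS : #S ≤ k) (h : Fin n → ℝ) (j : ℕ) :
    (support (blockPart S σ k h j)).ncard ≤ k :=
  (ncard_support_indicator_le _ _).trans (card_blockIndex_fiber_le hk hS j)

lemma blockPart_dotProduct_blockPart {i j : ℕ} (hij : i ≠ j) (h : Fin n → ℝ) :
    blockPart S σ k h i ⬝ᵥ blockPart S σ k h j = 0 := by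
  refine indicator_dotProduct_indicator_of_disjoint ?_ h h
  simp only [coe_filter, mem_univ, true_and]
  exact Set.disjoint_left.2 fun t hi hj => hij (hi.symm.trans hj)

lemma sum_sqrt_blockPart_le (hk : 0 < k) (hS : #S ≤ k) {h : Fin n → ℝ}
    (hσ : Monotone ((fun t => if t ∈ S then (1 : ℝ) else -|h t|) ∘ σ))
    (hcone : ∑ t ∈ Sᶜ, |h t| ≤ ∑ t ∈ S, |h t|) :
    ∑ j ∈ range n, √(blockPart S σ k h (j + 2) ⬝ᵥ blockPart S σ k h (j + 2)) ≤
      √(blockPart S σ k h 0 ⬝ᵥ blockPart S σ k h 0) := by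
  have hB0 : ({t | blockIndex S σ k t = 0} : Finset (Fin n)) = S := by
    ext t
    simp [blockIndex_eq_zero_iff]
  have hcompl :
      ∑ j ∈ range n, ∑ t with blockIndex S σ k t = j + 1, |h t| ≤ ∑ t ∈ Sᶜ, |h t| := by
    have hsplit := sum_fiberwise_of_maps_to (s := univ) (t := range (n + 2))
      (g := blockIndex S σ k) (fun t _ => mem_range.2 (blockIndex_lt t)) fun t => |h t|
    rw [sum_range_succ', sum_range_succ, ← sum_add_sum_compl S] at hsplit
    have hlast : 0 ≤ ∑ t with blockIndex S σ k t = n + 1, |h t| :=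
      sum_nonneg fun t _ => abs_nonneg _
    rw [hB0] at hsplit
    linarith
  calc ∑ j ∈ range n, √(blockPart S σ k h (j + 2) ⬝ᵥ blockPart S σ k h (j + 2))
      ≤ ∑ j ∈ range n, (∑ t with blockIndex S σ k t = j + 1, |h t|) / √k := by
        simp only [blockPart, indicator_dotProduct_indicator_self]
        exact sum_le_sum fun j _ => sqrt_sum_sq_blockIndex_le hk hS hσ j
    _ ≤ (∑ t ∈ S, |h t|) / √k := by
        rw [← sum_div]
        gcongr
        exact hcompl.trans hcone
    _ ≤ √(blockPart S σ k h 0 ⬝ᵥ blockPart S σ k h 0) := by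
        have hS_abs : ∑ t ∈ S, |h t| = ∑ t, |blockPart S σ k h 0 t| := by
          unfold blockPart
          rw [sum_abs_indicator, hB0]
        rw [div_le_iff₀' (by positivity), hS_abs]
        exact sum_abs_le_sqrt_mul_sqrt_dotProduct (ncard_support_blockPart_le hk hS h 0)

end blockIndex

section RIP

variable {m n : ℕ} {A : Matrix (Fin m) (Fin n) ℝ} {δ : ℝ}

lemma RIP.dotProduct_bounds {s : ℕ} (hA : RIP A s δ) {v : Fin n → ℝ}
    (hv : (support v).ncard ≤ s) :
    (1 - δ) * (v ⬝ᵥ v) ≤ (A *ᵥ v) ⬝ᵥ (A *ᵥ v) ∧ (A *ᵥ v) ⬝ᵥ (A *ᵥ v) ≤ (1 + δ) * (v ⬝ᵥ v) := by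
  simpa only [dotProduct, ← sq] using hA v hv

lemma RIP.abs_dotProduct_mulVec_le_half {s r : ℕ} (hA : RIP A (s + r) δ) {u v : Fin n → ℝ}
    (hu : (support u).ncard ≤ s) (hv : (support v).ncard ≤ r) (huv : u ⬝ᵥ v = 0) :
    |(A *ᵥ u) ⬝ᵥ (A *ᵥ v)| ≤ δ / 2 * (u ⬝ᵥ u + v ⬝ᵥ v) := by
  have hadd := hA.dotProduct_bounds ((ncard_support_add_le u v).trans (add_le_add hu hv))
  have hsub := hA.dotProduct_bounds (v := u + -v)
    ((ncard_support_add_le u (-v)).trans (add_le_add hu (by rwa [support_neg])))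
  rw [dotProduct_add_self_of_dotProduct_eq_zero huv] at hadd
  rw [dotProduct_add_self_of_dotProduct_eq_zero (by simp [huv]), neg_dotProduct_neg] at hsub
  have hpolar : (A *ᵥ (u + v)) ⬝ᵥ (A *ᵥ (u + v)) - (A *ᵥ (u + -v)) ⬝ᵥ (A *ᵥ (u + -v)) =
      4 * ((A *ᵥ u) ⬝ᵥ (A *ᵥ v)) := by
    simp only [mulVec_add, mulVec_neg, add_dotProduct, dotProduct_add, neg_dotProduct,
      dotProduct_neg, dotProduct_comm (A *ᵥ v) (A *ᵥ u)]
    ring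
  rw [abs_le]
  constructor <;> linarith [hadd.1, hadd.2, hsub.1, hsub.2]

lemma RIP.abs_dotProduct_mulVec_le {s r : ℕ} (hA : RIP A (s + r) δ) {u v : Fin n → ℝ}
    (hu : (support u).ncard ≤ s) (hv : (support v).ncard ≤ r) (huv : u ⬝ᵥ v = 0) :
    |(A *ᵥ u) ⬝ᵥ (A *ᵥ v)| ≤ δ * √(u ⬝ᵥ u) * √(v ⬝ᵥ v) := by
  rcases eq_or_ne u 0 with rfl | hu0
  · simp
  rcases eq_or_ne v 0 with rfl | hv0
  · simp
  set a := √(u ⬝ᵥ u)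
  set b := √(v ⬝ᵥ v)
  have ha : 0 < a := Real.sqrt_pos.2 (dotProduct_self_pos hu0)
  have hb : 0 < b := Real.sqrt_pos.2 (dotProduct_self_pos hv0)
  have hunit := hA.abs_dotProduct_mulVec_le_half (u := a⁻¹ • u) (v := b⁻¹ • v)
    (by rwa [support_const_smul_of_ne_zero _ _ (inv_ne_zero ha.ne')])
    (by rwa [support_const_smul_of_ne_zero _ _ (inv_ne_zero hb.ne')])
    (by simp [huv])
  have hua : u ⬝ᵥ u = a * a := (Real.mul_self_sqrt (dotProduct_self_nonneg u)).symm
  have hvb : v ⬝ᵥ v = b * b := (Real.mul_self_sqrt (dotProduct_self_nonneg v)).symm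
  simp only [mulVec_smul, smul_dotProduct, dotProduct_smul, smul_eq_mul, hua, hvb, abs_mul,
    abs_inv, abs_of_pos ha, abs_of_pos hb] at hunit
  rw [inv_mul_le_iff₀ hb, inv_mul_le_iff₀ ha] at hunit
  field_simp at hunit
  linarith

lemma RIP.dotProduct_mulVec_head_le {k N : ℕ} (hA : RIP A (2 * k) δ) {u : ℕ → Fin n → ℝ}
    (hsparse : ∀ j, (support (u j)).ncard ≤ k) (horth : Pairwise fun i j => u i ⬝ᵥ u j = 0)
    (hker : A *ᵥ (u 0 + u 1 + ∑ j ∈ range N, u (j + 2)) = 0) :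
    (A *ᵥ (u 0 + u 1)) ⬝ᵥ (A *ᵥ (u 0 + u 1)) ≤
      δ * (√(u 0 ⬝ᵥ u 0) + √(u 1 ⬝ᵥ u 1)) * ∑ j ∈ range N, √(u (j + 2) ⬝ᵥ u (j + 2)) := by
  rw [two_mul] at hA
  have hcross (i j : ℕ) (hij : i ≠ j) :=
    hA.abs_dotProduct_mulVec_le (hsparse i) (hsparse j) (horth hij)
  have hhead : A *ᵥ (u 0 + u 1) = -∑ j ∈ range N, A *ᵥ u (j + 2) := by
    rw [mulVec_add _ (u 0 + u 1), mulVec_sum] at hker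
    exact eq_neg_of_add_eq_zero_left hker
  calc (A *ᵥ (u 0 + u 1)) ⬝ᵥ (A *ᵥ (u 0 + u 1))
      = (A *ᵥ (u 0 + u 1)) ⬝ᵥ -∑ j ∈ range N, A *ᵥ u (j + 2) := by rw [← hhead]
    _ = ∑ j ∈ range N, -((A *ᵥ u 0) ⬝ᵥ (A *ᵥ u (j + 2)) + (A *ᵥ u 1) ⬝ᵥ (A *ᵥ u (j + 2))) := by
        simp only [dotProduct_neg, dotProduct_sum, mulVec_add, add_dotProduct, sum_neg_distrib]
    _ ≤ ∑ j ∈ range N, (δ * √(u 0 ⬝ᵥ u 0) * √(u (j + 2) ⬝ᵥ u (j + 2)) +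
          δ * √(u 1 ⬝ᵥ u 1) * √(u (j + 2) ⬝ᵥ u (j + 2))) := by
        refine sum_le_sum fun j _ => ?_
        have h0 := (abs_le.1 (hcross 0 (j + 2) (by omega))).1
        have h1 := (abs_le.1 (hcross 1 (j + 2) (by omega))).1
        linarith
    _ = _ := by
        rw [mul_sum]
        exact sum_congr rfl fun j _ => by ring

lemma RIP.sum_blocks_eq_zero {k N : ℕ} (hA : RIP A (2 * k) δ) (hδ0 : 0 ≤ δ)
    (hδ : δ < √2 - 1) {u : ℕ → Fin n → ℝ}
    (hsparse : ∀ j, (support (u j)).ncard ≤ k) (horth : Pairwise fun i j => u i ⬝ᵥ u j = 0)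
    (hker : A *ᵥ (u 0 + u 1 + ∑ j ∈ range N, u (j + 2)) = 0)
    (htail : ∑ j ∈ range N, √(u (j + 2) ⬝ᵥ u (j + 2)) ≤ √(u 0 ⬝ᵥ u 0)) :
    u 0 + u 1 + ∑ j ∈ range N, u (j + 2) = 0 := by
  set a := √(u 0 ⬝ᵥ u 0)
  set b := √(u 1 ⬝ᵥ u 1)
  set W := (u 0 + u 1) ⬝ᵥ (u 0 + u 1)
  have hW : W = a ^ 2 + b ^ 2 := by
    rw [Real.sq_sqrt (dotProduct_self_nonneg _), Real.sq_sqrt (dotProduct_self_nonneg _)]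
    exact dotProduct_add_self_of_dotProduct_eq_zero (horth zero_ne_one)
  have ha : a ≤ √W := Real.le_sqrt_of_sq_le (by rw [hW]; nlinarith)
  have hab : a + b ≤ √2 * √W := by
    rw [← Real.sqrt_mul zero_le_two]
    exact Real.le_sqrt_of_sq_le (by rw [hW]; nlinarith [sq_nonneg (a - b)])
  have hlow := (hA.dotProduct_bounds ((ncard_support_add_le _ _).trans
    (by rw [two_mul]; exact add_le_add (hsparse 0) (hsparse 1)))).1
  have hup := hA.dotProduct_mulVec_head_le hsparse horth hker
  have hWle : (1 - δ) * W ≤ √2 * δ * W :=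
    calc (1 - δ) * W ≤ δ * (a + b) * a := hlow.trans (hup.trans (by gcongr))
      _ ≤ δ * (√2 * √W) * √W := by gcongr
      _ = √2 * δ * W := by
        rw [mul_assoc, mul_assoc, Real.mul_self_sqrt (dotProduct_self_nonneg _)]
        ring
  have hW0 : W = 0 := by
    have : 0 < 1 - δ - √2 * δ := by nlinarith [Real.sq_sqrt zero_le_two, Real.sqrt_nonneg 2]
    nlinarith [dotProduct_self_nonneg (u 0 + u 1)]
  have ha0 : a = 0 := by nlinarith [Real.sqrt_nonneg (u 0 ⬝ᵥ u 0), sq_nonneg b]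
  have htail0 : ∀ j ∈ range N, u (j + 2) = 0 := fun j hj => by
    have hsum := le_antisymm (ha0 ▸ htail) (sum_nonneg fun j _ => Real.sqrt_nonneg _)
    have := (sum_eq_zero_iff_of_nonneg fun j _ => Real.sqrt_nonneg _).1 hsum j hj
    exact dotProduct_self_eq_zero.1 ((Real.sqrt_eq_zero (dotProduct_self_nonneg _)).1 this)
  rw [dotProduct_self_eq_zero.1 hW0, sum_eq_zero htail0, add_zero]

theorem RIP.nullSpaceProperty {k : ℕ} (hA : RIP A (2 * k) δ) (hδ0 : 0 ≤ δ)
    (hδ : δ < √2 - 1) : NullSpaceProperty A k := by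
  intro h hker hne S hS
  by_contra! hcone
  apply hne
  rcases k.eq_zero_or_pos with rfl | hk
  · obtain rfl : S = ∅ := card_eq_zero.1 (Nat.le_zero.1 hS)
    ext t
    simpa using (sum_eq_zero_iff_of_nonneg fun t _ => abs_nonneg (h t)).1
      (le_antisymm (by simpa using hcone) (sum_nonneg fun t _ => abs_nonneg _)) t (mem_univ t)
  -- sort `Sᶜ` by decreasing `|h|`, and put `S` last
  set σ := Tuple.sort fun t => if t ∈ S then (1 : ℝ) else -|h t|
  rw [← blockPart_zero_add_one_add_sum (σ := σ) (k := k) h] at hker ⊢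
  exact hA.sum_blocks_eq_zero hδ0 hδ (ncard_support_blockPart_le hk hS h)
    (fun i j hij => blockPart_dotProduct_blockPart hij h) hker
    (sum_sqrt_blockPart_le hk hS (Tuple.monotone_sort _) hcone)

end RIP

theorem rip_l1_unique_minimizer_general {m n k : ℕ} (A : Matrix (Fin m) (Fin n) ℝ) (δ : ℝ)
    (hδ0 : 0 < δ) (hδ : δ < Real.sqrt 2 - 1) (hRIP : RIP A (2 * k) δ)
    (x : Fin n → ℝ) (hx : (Function.support x).ncard ≤ k) :
    ∀ z : Fin n → ℝ, A.mulVec z = A.mulVec x → z ≠ x →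
      (∑ j, |x j|) < ∑ j, |z j| :=
  fun _ hz hzx => (hRIP.nullSpaceProperty hδ0.le hδ).sum_abs_lt hx hz hzx

/-- If `A` satisfies the RIP of order `2k` with constant
`δ_{2k} < √2 − 1` and `x` is `k`-sparse, then `x` is the unique `ℓ₁` minimizer among
all solutions of `A z = A x`. -/
theorem rip_l1_unique_minimizer {m n k : ℕ} (A : Matrix (Fin m) (Fin n) ℝ) (δ : ℝ)
    (hδ0 : 0 < δ) (hδ1 : δ < 1) (hδ : δ < Real.sqrt 2 - 1) (hRIP : RIP A (2 * k) δ)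
    (x : Fin n → ℝ) (hx : (Function.support x).ncard ≤ k) :
    ∀ z : Fin n → ℝ, A.mulVec z = A.mulVec x → z ≠ x →
      (∑ j, |x j|) < ∑ j, |z j| :=
  rip_l1_unique_minimizer_general A δ hδ0 hδ hRIP x hx
end
end

section
/- Let A be an m×n real matrix with 1 ≤ m < n whose columns all have unit Euclidean norm. Then the mutual coherence of A satisfies the Welch lower bound: μ(A) ≥ √((n − m) / (m(n − 1))). -/
/-!
The Gram matrix `G = AᵀA` of unit columns has unit diagonal, so `tr G = n`. Since
`‖AᵀA‖_F = ‖AAᵀ‖_F` and `AAᵀ` is an `m × m` matrix with the same trace, Cauchy–Schwarz on its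
diagonal gives `‖G‖_F² ≥ n² / m`. The squares of the `n(n - 1)` off-diagonal entries of `G` thus sum
to at least `n² / m - n`, and one of them is at least their average `(n - m) / (m(n - 1))`.
-/

noncomputable section
open Matrix ENNReal

open Finset

theorem Finset.sum_sum_eq_sum_add_sum_offDiag {α M : Type*} [Fintype α] [DecidableEq α]
    [AddCommMonoid M] (f : α → α → M) :
    ∑ i, ∑ j, f i j = ∑ i, f i i + ∑ p ∈ univ.offDiag, f p.1 p.2 := by
  rw [← sum_product', ← diag_union_offDiag, sum_union (disjoint_diag_offDiag _), sum_diag]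

namespace Matrix

variable {ι κ R : Type*} [Fintype ι]

theorem transpose_mul_self_apply_self_s15 [CommRing R] (A : Matrix ι κ R) (j : κ) :
    (Aᵀ * A) j j = ∑ i, A i j ^ 2 := by
  simp [mul_apply, sq]

theorem sq_trace_le_card_mul_sum_sq [Field R] [LinearOrder R] [IsStrictOrderedRing R]
    (M : Matrix ι ι R) :
    M.trace ^ 2 ≤ Fintype.card ι * ∑ i, ∑ j, M i j ^ 2 := calc
  M.trace ^ 2 ≤ Fintype.card ι * ∑ i, M i i ^ 2 := sq_sum_le_card_mul_sum_sq
  _ ≤ Fintype.card ι * ∑ i, ∑ j, M i j ^ 2 := by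
    gcongr with i
    exact single_le_sum (f := fun j => M i j ^ 2) (fun _ _ => sq_nonneg _) (mem_univ i)

variable [Fintype κ]

theorem sum_sq_entries_eq_trace_mul_transpose [CommRing R] (M : Matrix ι κ R) :
    ∑ i, ∑ j, M i j ^ 2 = (M * Mᵀ).trace := by
  simp [trace, mul_apply, sq]

theorem sum_sq_transpose_mul_self_eq [CommRing R] (A : Matrix ι κ R) :
    ∑ i, ∑ j, (Aᵀ * A) i j ^ 2 = ∑ i, ∑ j, (A * Aᵀ) i j ^ 2 := by
  simp only [sum_sq_entries_eq_trace_mul_transpose, transpose_mul, transpose_transpose,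
    Matrix.mul_assoc]
  rw [trace_mul_comm Aᵀ, Matrix.mul_assoc, Matrix.mul_assoc]

variable [Field R] [LinearOrder R] [IsStrictOrderedRing R]

theorem sq_trace_transpose_mul_self_le (A : Matrix ι κ R) :
    (Aᵀ * A).trace ^ 2 ≤ Fintype.card ι * ∑ i, ∑ j, (Aᵀ * A) i j ^ 2 := by
  rw [trace_mul_comm, sum_sq_transpose_mul_self_eq]
  exact sq_trace_le_card_mul_sum_sq _

theorem card_sq_le_card_mul_add_sum_offDiag [DecidableEq κ] (A : Matrix ι κ R)
    (hA : ∀ j, ∑ i, A i j ^ 2 = 1) :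
    (Fintype.card κ : R) ^ 2 ≤
      Fintype.card ι * (Fintype.card κ + ∑ p ∈ univ.offDiag, (Aᵀ * A) p.1 p.2 ^ 2) := by
  have hdiag : ∀ j, (Aᵀ * A) j j = 1 := fun j => (transpose_mul_self_apply_self_s15 A j).trans (hA j)
  have htrace : (Aᵀ * A).trace = Fintype.card κ := by simp [trace, hdiag]
  simpa [htrace, sum_sum_eq_sum_add_sum_offDiag, hdiag] using sq_trace_transpose_mul_self_le A

theorem exists_ne_le_sq_transpose_mul_self [Nonempty ι] [DecidableEq κ] (A : Matrix ι κ R)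
    (hA : ∀ j, ∑ i, A i j ^ 2 = 1) (hικ : Fintype.card ι < Fintype.card κ) :
    ∃ i j, i ≠ j ∧ ((Fintype.card κ : R) - Fintype.card ι) /
      (Fintype.card ι * (Fintype.card κ - 1)) ≤ (Aᵀ * A) i j ^ 2 := by
  have hgram := card_sq_le_card_mul_add_sum_offDiag A hA
  set m := Fintype.card ι
  set n := Fintype.card κ
  set c := ((n : R) - m) / (m * (n - 1))
  have hn₁ : 1 < n := Nat.lt_of_le_of_lt Fintype.card_pos hικ
  have hm : (0 : R) < m := by exact_mod_cast Fintype.card_pos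
  have hn : (1 : R) < n := by exact_mod_cast hn₁
  have hsum : ∑ _p ∈ (univ : Finset κ).offDiag, c = n * (n - 1) * c := by
    rw [sum_const, offDiag_card, card_univ, nsmul_eq_mul, Nat.cast_sub (Nat.le_mul_self n)]
    push_cast
    ring
  have hmc : m * (n * (n - 1) * c) = n * (n - m) := by
    have : (n : R) - 1 ≠ 0 := by linarith
    simp only [c]
    field_simp
  have hoffDiag : (univ : Finset κ).offDiag.Nonempty := by
    simpa [← card_pos, offDiag_card] using Nat.lt_mul_self_iff.mpr hn₁
  have hcS : n * (n - 1) * c ≤ ∑ p ∈ univ.offDiag, (Aᵀ * A) p.1 p.2 ^ 2 :=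
    le_of_mul_le_mul_left (by linarith) hm
  obtain ⟨⟨i, j⟩, hij, hc⟩ := Finset.exists_le_of_sum_le hoffDiag (hsum.trans_le hcS)
  exact ⟨i, j, (mem_offDiag.mp hij).2.2, hc⟩

end Matrix

theorem le_coherence {m n : ℕ} (A : Matrix (Fin m) (Fin n) ℝ) {i j : Fin n} (hij : i ≠ j) :
    |∑ t, A t i * A t j| / (Real.sqrt (∑ t, A t i ^ 2) * Real.sqrt (∑ t, A t j ^ 2)) ≤
      coherence A := by
  refine le_csSup (Set.Finite.bddAbove ?_) ⟨i, j, hij, rfl⟩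
  refine (Set.finite_range fun p : Fin n × Fin n => |∑ t, A t p.1 * A t p.2| /
    (Real.sqrt (∑ t, A t p.1 ^ 2) * Real.sqrt (∑ t, A t p.2 ^ 2))).subset ?_
  rintro _ ⟨i, j, -, rfl⟩
  exact ⟨(i, j), rfl⟩

/-- Welch bound: for `1 ≤ m < n` and unit-norm columns,
`μ(A) ≥ √((n − m)/(m(n − 1)))`. -/
theorem welch_lower_bound {m n : ℕ} (hm : 1 ≤ m) (hmn : m < n)
    (A : Matrix (Fin m) (Fin n) ℝ)
    (hA : ∀ j : Fin n, Real.sqrt (∑ i, A i j ^ 2) = 1) :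
    Real.sqrt (((n : ℝ) - (m : ℝ)) / ((m : ℝ) * ((n : ℝ) - 1))) ≤ coherence A := by
  have : Nonempty (Fin m) := ⟨⟨0, hm⟩⟩
  obtain ⟨i, j, hij, hc⟩ := exists_ne_le_sq_transpose_mul_self A
    (fun j => Real.sqrt_eq_one.mp (hA j)) (by simpa using hmn)
  calc Real.sqrt (((n : ℝ) - m) / (m * (n - 1)))
      ≤ Real.sqrt ((Aᵀ * A) i j ^ 2) := by simpa using Real.sqrt_le_sqrt hc
    _ = |∑ t, A t i * A t j| / (Real.sqrt (∑ t, A t i ^ 2) * Real.sqrt (∑ t, A t j ^ 2)) := by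
      simp [hA, Real.sqrt_sq_eq_abs, mul_apply]
    _ ≤ coherence A := le_coherence A hij
end
end
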